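/- Let 1 ≤ s ≤ n − 1 and let x̄ ∈ A_s with x̄ ≠ 0. For every δ ≥ min{|x̄_j| : x̄_j ≠ 0} there exist a point x ∈ A_s with ‖x − x̄‖ ≤ δ, an index set J of cardinality s with I(x) ⊆ J, and a vector v in A_J^⊥ (the orthogonal complement of the coordinate subspace A_J) such that ⟨v, x̄ − x⟩ > 0. That is, A_s fails to be (0,δ)-subregular at x̄ for any such δ. -/

import Mathlib

/-!
Zero out a nonzero coordinate `x̄ⱼ` with `|x̄ⱼ| ≤ δ`. The resulting `x` lies in `A_s` at distance
`|x̄ⱼ|` from `x̄`, and since `s < n` its support extends to an `s`-set `J` avoiding `j`. Then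
`v = x̄ - x = x̄ⱼ eⱼ` lies in `A_J^⊥` and `⟪v, x̄ - x⟫ = x̄ⱼ² > 0`.
-/

open scoped InnerProductSpace

/-- Number of nonzero entries of a vector (the ℓ₀-"norm"). -/
noncomputable def sparsity {n : ℕ} (x : EuclideanSpace ℝ (Fin n)) : ℕ :=
  (Finset.univ.filter (fun i => x i ≠ 0)).card

/-- `A_s`, the set of vectors with at most `s` nonzero entries. -/
def Asp (n s : ℕ) : Set (EuclideanSpace ℝ (Fin n)) := {x | sparsity x ≤ s}

/-- `A_J`, the coordinate subspace spanned by the standard unit vectors `e_i`, `i ∈ J`. -/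
def AJ {n : ℕ} (J : Finset (Fin n)) : Submodule ℝ (EuclideanSpace ℝ (Fin n)) :=
  Submodule.span ℝ ((fun i => EuclideanSpace.single i (1:ℝ)) '' ↑J)

section

open EuclideanSpace

variable {n : ℕ}

theorem mem_orthogonal_AJ_iff {J : Finset (Fin n)} {v : EuclideanSpace ℝ (Fin n)} :
    v ∈ (AJ J)ᗮ ↔ ∀ i ∈ J, v i = 0 := by
  rw [← Submodule.span_singleton_le_iff_mem, ← Submodule.isOrtho_iff_le, AJ,
    Submodule.isOrtho_span]
  simp [inner_single_right]

theorem sparsity_le_of_support_subset {x y : EuclideanSpace ℝ (Fin n)}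
    (h : ∀ i, x i ≠ 0 → y i ≠ 0) : sparsity x ≤ sparsity y :=
  Finset.card_le_card fun i hi => by simp_all

theorem sub_single_self_apply_ne_zero_iff (x : EuclideanSpace ℝ (Fin n)) (j i : Fin n) :
    (x - single j (x j)) i ≠ 0 ↔ i ≠ j ∧ x i ≠ 0 := by
  by_cases h : i = j <;> simp [h]

theorem exists_card_eq_support_subset_of_apply_eq_zero {s : ℕ} (hsn : s + 1 ≤ n)
    {x : EuclideanSpace ℝ (Fin n)} (hx : sparsity x ≤ s) {j : Fin n} (hj : x j = 0) :
    ∃ J : Finset (Fin n), J.card = s ∧ (∀ i, x i ≠ 0 → i ∈ J) ∧ j ∉ J := by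
  have hsupp : Finset.univ.filter (fun i => x i ≠ 0) ⊆ Finset.univ.erase j := fun i hi => by
    simp only [Finset.mem_filter] at hi
    exact Finset.mem_erase.2 ⟨fun hij => hi.2 (hij ▸ hj), Finset.mem_univ i⟩
  have hcard : s ≤ (Finset.univ.erase j).card := by
    rw [Finset.card_erase_of_mem (Finset.mem_univ j), Finset.card_univ, Fintype.card_fin]
    omega
  obtain ⟨J, hsuppJ, hJ, hJcard⟩ := Finset.exists_subsuperset_card_eq hsupp hx hcard
  exact ⟨J, hJcard, fun i hi => hsuppJ (by simpa using hi),
    fun hjJ => (Finset.mem_erase.1 (hJ hjJ)).1 rfl⟩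

end

/-- `δ ≥ min{|x̄_j| : x̄_j ≠ 0}` is expressed as: some nonzero entry of `x̄` has `|x̄_j| ≤ δ`. -/
theorem stmt5 {n s : ℕ} (hsn : s + 1 ≤ n)
    (xb : EuclideanSpace ℝ (Fin n)) (hxb : xb ∈ Asp n s)
    (δ : ℝ) (hδ : ∃ j, xb j ≠ 0 ∧ |xb j| ≤ δ) :
    ∃ x ∈ Asp n s, ‖x - xb‖ ≤ δ ∧
      ∃ J : Finset (Fin n), J.card = s ∧ (∀ i, x i ≠ 0 → i ∈ J) ∧
        ∃ v ∈ (AJ J)ᗮ, ⟪v, xb - x⟫_ℝ > 0 := by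
  obtain ⟨j, hj, hjδ⟩ := hδ
  set x := xb - EuclideanSpace.single j (xb j)
  have hxAs : x ∈ Asp n s := le_trans (sparsity_le_of_support_subset fun i hi =>
    ((sub_single_self_apply_ne_zero_iff xb j i).1 hi).2) hxb
  obtain ⟨J, hJcard, hsuppJ, hjJ⟩ :=
    exists_card_eq_support_subset_of_apply_eq_zero hsn hxAs (j := j) (by simp [x])
  have hv : EuclideanSpace.single j (xb j) ∈ (AJ J)ᗮ := mem_orthogonal_AJ_iff.2 fun i hi => by
    simp [show i ≠ j from fun h => hjJ (h ▸ hi)]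
  have hxbx : xb - x = EuclideanSpace.single j (xb j) := by simp [x]
  refine ⟨x, hxAs, ?_, J, hJcard, hsuppJ, _, hv, ?_⟩
  · rw [← norm_neg, neg_sub, hxbx, PiLp.norm_single]
    exact hjδ
  · rw [hxbx, real_inner_self_eq_norm_sq, PiLp.norm_single]
    exact pow_pos (norm_pos_iff.2 hj) 2
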